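/- For each m < ω there is an M < ω such that whenever 𝒴 is a finite family of ordered pairs (X,Y) with X ⊆ 𝔹 linearly independent and Y suitable for X, and whenever a (𝒴,M)-adequate subset of 𝔹 is partitioned into two cells, one of the cells must be (𝒴,m)-adequate. -/

import Mathlib

open scoped BigOperators

attribute [local instance] Classical.propDecidable

/-- The countable Boolean group, realized as `ℕ →₀ ZMod 2` (equivalently, finite subsets
of ℕ under symmetric difference), a vector space over `𝔽₂ = ZMod 2`. -/
abbrev BoolGrp : Type := ℕ →₀ ZMod 2

/-- The set of finite sums (symmetric differences) of nonempty finite subsets of `X`. -/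
def FSset (X : Set BoolGrp) : Set BoolGrp :=
  {g | ∃ S : Finset BoolGrp, S.Nonempty ∧ ↑S ⊆ X ∧ g = ∑ v ∈ S, v}

/-- The `X`-support of `y`: for linearly independent `X` and `y` in the span of `X`,
the unique finite `S ⊆ X` with `y = ∑_{v ∈ S} v` (junk value `∅` otherwise). -/
noncomputable def Xsupp (X : Set BoolGrp) (y : BoolGrp) : Finset BoolGrp :=
  if h : ∃ S : Finset BoolGrp, ↑S ⊆ X ∧ y = ∑ v ∈ S, v then h.choose else ∅

/-- The `X`-support of a set `Y`: the union of the `X`-supports of its elements. -/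
noncomputable def XsuppSet (X Y : Set BoolGrp) : Set BoolGrp :=
  ⋃ y ∈ Y, (Xsupp X y : Set BoolGrp)

/-- An `m`-witness for the suitability of `Y` for `X`: an `m`-sequence of elements of
`Y` whose `X`-supports pairwise intersect. -/
def SuitWitness (X Y : Set BoolGrp) {m : ℕ} (y : Fin m → BoolGrp) : Prop :=
  (∀ i, y i ∈ Y) ∧ ∀ i j : Fin m, i < j →
    ((Xsupp X (y i) : Set BoolGrp) ∩ (Xsupp X (y j) : Set BoolGrp)).Nonempty

/-- `Y ⊆ FS(X)` is suitable for (linearly independent) `X` if (i) for each `m` there is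
an `m`-witness for suitability, and (ii) whenever the `X`-supports of `y, y' ∈ Y` (not
necessarily distinct) intersect, the intersection is not covered by the `X`-support of
`Y \ {y, y'}`. -/
def Suitable (X Y : Set BoolGrp) : Prop :=
  Y ⊆ FSset X ∧
  (∀ m : ℕ, ∃ y : Fin m → BoolGrp, SuitWitness X Y y) ∧
  ∀ y ∈ Y, ∀ y' ∈ Y,
    ((Xsupp X y : Set BoolGrp) ∩ (Xsupp X y' : Set BoolGrp)).Nonempty →
    (((Xsupp X y : Set BoolGrp) ∩ (Xsupp X y' : Set BoolGrp)) \
      XsuppSet X (Y \ {y, y'})).Nonempty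

/-- The set of finite sums of a finite sequence `a : Fin m → BoolGrp`. -/
def FSfin {m : ℕ} (a : Fin m → BoolGrp) : Set BoolGrp :=
  {g | ∃ s : Finset (Fin m), s.Nonempty ∧ g = ∑ j ∈ s, a j}

/-- `a` is a `(𝒴, m)`-witness for the adequacy of `A`: for each `(X, Y) ∈ 𝒴`,
`FS(a) ⊆ A ∩ FS(Y)` and there is an `m`-witness `y` for the suitability of `Y` such that
for all distinct `j, k`, `y j ∈ Y-supp(a j)` and `y j ∉ Y-supp(a k)`. -/
def AdequateWitness (𝒴 : Set (Set BoolGrp × Set BoolGrp)) (A : Set BoolGrp)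
    {m : ℕ} (a : Fin m → BoolGrp) : Prop :=
  ∀ XY ∈ 𝒴, FSfin a ⊆ A ∩ FSset XY.2 ∧
    ∃ y : Fin m → BoolGrp, SuitWitness XY.1 XY.2 y ∧
      ∀ j k : Fin m, j ≠ k → y j ∈ Xsupp XY.2 (a j) ∧ y j ∉ Xsupp XY.2 (a k)

/-- `A` is `(𝒴, m)`-adequate if there is a `(𝒴, m)`-witness for its adequacy. -/
def Adequate (𝒴 : Set (Set BoolGrp × Set BoolGrp)) (m : ℕ) (A : Set BoolGrp) : Prop :=
  ∃ a : Fin m → BoolGrp, AdequateWitness 𝒴 A a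

/-- `A` is `𝒳`-adequate if it is `(𝒴, m)`-adequate for every finite `𝒴 ⊆ 𝒳` and
every `m`. -/
def XAdequate (𝒳 : Set (Set BoolGrp × Set BoolGrp)) (A : Set BoolGrp) : Prop :=
  ∀ 𝒴 ⊆ 𝒳, 𝒴.Finite → ∀ m : ℕ, Adequate 𝒴 m A

/-- A family of pairs `(X, Y)` with each `X` linearly independent and each `Y` suitable
for `X`. -/
def GoodFamily (𝒳 : Set (Set BoolGrp × Set BoolGrp)) : Prop :=
  ∀ XY ∈ 𝒳, LinearIndependent (ZMod 2) ((↑) : XY.1 → BoolGrp) ∧ Suitable XY.1 XY.2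

/-!
Let `a` witness the `(𝒴, M)`-adequacy of `A` and colour each finite `S ⊆ M` by whether
`∑_{i ∈ S} a i ∈ A₀`. By the finite unions theorem there are, for `M` large, `m` disjoint
nonempty blocks `D j` all of whose unions receive the same colour; the block sums
`b j = ∑_{i ∈ D j} a i` then witness the `(𝒴, m)`-adequacy of that cell. The suitability witness
is `j ↦ y (r j)` for a pivot `r j ∈ D j`: suitability makes `Y` linearly independent (each
`y ∈ Y` owns a point of its `X`-support that no other member of `Y` uses), so `Y`-supports are
read off by coordinate functionals, and `y (r j)` lies in `Y-supp (b k)` exactly when `k = j`.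

The finite unions theorem comes from an idempotent ultrafilter on `𝔹` whose members eventually
avoid every finite set of coordinates, which yields the infinite version, followed by a
compactness argument.
-/

theorem exists_dual_eq_ite {K V : Type*} [Field K] [AddCommGroup V] [Module K V] [DecidableEq V]
    {X : Set V} (hX : LinearIndependent K ((↑) : X → V)) {v : V} (hv : v ∈ X) :
    ∃ φ : Module.Dual K V, ∀ w ∈ X, φ w = if w = v then 1 else 0 := by
  let B := Module.Basis.extend hX
  refine ⟨B.coord ⟨v, Module.Basis.subset_extend hX hv⟩, fun w hw => ?_⟩
  have hw' : B ⟨w, Module.Basis.subset_extend hX hw⟩ = w := Module.Basis.extend_apply_self hX _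
  conv_lhs => rw [← hw']
  rw [Module.Basis.coord_apply, Module.Basis.repr_self, Finsupp.single_apply]
  simp [Subtype.ext_iff, eq_comm]

section Supports

variable {X : Set BoolGrp} {v x : BoolGrp} {φ : Module.Dual (ZMod 2) BoolGrp}

theorem dual_sum_eq_ite (hφ : ∀ w ∈ X, φ w = if w = v then 1 else 0) {S : Finset BoolGrp}
    (hS : ↑S ⊆ X) : φ (∑ w ∈ S, w) = if v ∈ S then 1 else 0 := by
  rw [map_sum, Finset.sum_congr rfl fun w hw => hφ w (hS hw), Finset.sum_ite_eq']

theorem Xsupp_spec (hx : x ∈ FSset X) : ↑(Xsupp X x) ⊆ X ∧ x = ∑ w ∈ Xsupp X x, w := by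
  obtain ⟨S, -, hSX, rfl⟩ := hx
  have h : ∃ T : Finset BoolGrp, ↑T ⊆ X ∧ ∑ w ∈ S, w = ∑ w ∈ T, w := ⟨S, hSX, rfl⟩
  rw [Xsupp, dif_pos h]
  exact h.choose_spec

theorem dual_eq_ite_mem_Xsupp (hφ : ∀ w ∈ X, φ w = if w = v then 1 else 0)
    (hx : x ∈ FSset X) : φ x = if v ∈ Xsupp X x then 1 else 0 := by
  obtain ⟨hsub, hsum⟩ := Xsupp_spec hx
  conv_lhs => rw [hsum]
  exact dual_sum_eq_ite hφ hsub

theorem Xsupp_nonempty (hX : LinearIndependent (ZMod 2) ((↑) : X → BoolGrp))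
    (hx : x ∈ FSset X) : (Xsupp X x).Nonempty := by
  obtain ⟨S, ⟨v, hv⟩, hSX, rfl⟩ := hx
  obtain ⟨φ, hφ⟩ := exists_dual_eq_ite hX (hSX hv)
  have h := dual_eq_ite_mem_Xsupp hφ ⟨S, ⟨v, hv⟩, hSX, rfl⟩
  rw [dual_sum_eq_ite hφ hSX, if_pos hv] at h
  exact ⟨v, by_contra fun hv' => by simp [if_neg hv'] at h⟩

theorem Suitable.linearIndependent {Y : Set BoolGrp} (hY : Suitable X Y)
    (hX : LinearIndependent (ZMod 2) ((↑) : X → BoolGrp)) :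
    LinearIndependent (ZMod 2) ((↑) : Y → BoolGrp) := by
  have hpriv : ∀ y : Y, ∃ p ∈ Xsupp X y, ∀ y' ∈ Y, p ∈ Xsupp X y' → y' = y := by
    rintro ⟨y, hy⟩
    have hne : ((Xsupp X y : Set BoolGrp) ∩ Xsupp X y).Nonempty := by
      rw [Set.inter_self]
      exact Xsupp_nonempty hX (hY.1 hy)
    obtain ⟨p, hpy, hp⟩ := hY.2.2 y hy y hy hne
    refine ⟨p, hpy.1, fun y' hy' hpy' => by_contra fun hne' => hp ?_⟩
    exact Set.mem_biUnion (x := y') ⟨hy', by simpa using hne'⟩ hpy'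
  choose p hpy hp using hpriv
  have hdual : ∀ y : Y, ∃ φ : Module.Dual (ZMod 2) BoolGrp,
      ∀ w ∈ X, φ w = if w = p y then 1 else 0 :=
    fun y => exists_dual_eq_ite hX (Xsupp_spec (hY.1 y.2) |>.1 (hpy y))
  choose φ hφ using hdual
  refine LinearIndependent.of_pairwise_dual_eq_zero_one _ φ (fun y y' hyy' => ?_) fun y => ?_
  · change φ y y' = 0
    rw [dual_eq_ite_mem_Xsupp (hφ y) (hY.1 y'.2), if_neg]
    exact fun h => hyy' (Subtype.ext (hp y y' y'.2 h)).symm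
  · rw [dual_eq_ite_mem_Xsupp (hφ y) (hY.1 y.2), if_pos (hpy y)]

theorem mem_Xsupp_sum_iff (hX : LinearIndependent (ZMod 2) ((↑) : X → BoolGrp)) (hv : v ∈ X)
    {ι : Type*} {a : ι → BoolGrp} (ha : ∀ i, a i ∈ FSset X) {r : ι}
    (hr : ∀ i, v ∈ Xsupp X (a i) ↔ i = r) {D : Finset ι} (hD : ∑ i ∈ D, a i ∈ FSset X) :
    v ∈ Xsupp X (∑ i ∈ D, a i) ↔ r ∈ D := by
  obtain ⟨φ, hφ⟩ := exists_dual_eq_ite hX hv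
  have h := dual_eq_ite_mem_Xsupp hφ hD
  simp only [map_sum, dual_eq_ite_mem_Xsupp hφ (ha _), hr, Finset.sum_ite_eq'] at h
  by_cases hrD : r ∈ D <;> by_cases hvD : v ∈ Xsupp X (∑ i ∈ D, a i) <;> simp_all

end Supports

section FiniteUnions

open Filter

attribute [local instance] Ultrafilter.add Ultrafilter.addSemigroup

theorem exists_idempotent_ultrafilter_disjoint_support :
    ∃ U : Ultrafilter BoolGrp, U + U = U ∧
      ∀ F : Finset ℕ, ∀ᶠ g : BoolGrp in U, g ≠ 0 ∧ Disjoint g.support F := by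
  let T (F : Finset ℕ) : Set (Ultrafilter BoolGrp) :=
    {U | ∀ᶠ g : BoolGrp in U, g ≠ 0 ∧ Disjoint g.support F}
  have hT_closed (F : Finset ℕ) : IsClosed (T F) := ultrafilter_isClosed_basic _
  have hT_anti {F G : Finset ℕ} (h : F ⊆ G) : T G ⊆ T F :=
    fun U hU => hU.mono fun g hg => ⟨hg.1, hg.2.mono_right h⟩
  have hT_nonempty : (⋂ F, T F).Nonempty := by
    refine IsCompact.nonempty_iInter_of_directed_nonempty_isCompact_isClosed T
      (fun F G => ⟨F ∪ G, hT_anti Finset.subset_union_left, hT_anti Finset.subset_union_right⟩)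
      (fun F => ?_) (fun F => (hT_closed F).isCompact) hT_closed
    obtain ⟨n, hn⟩ := Infinite.exists_notMem_finset F
    exact ⟨pure (Finsupp.single n 1), by simp [T, hn]⟩
  have hT_add : ∀ U ∈ ⋂ F, T F, ∀ V ∈ ⋂ F, T F, U + V ∈ ⋂ F, T F := by
    intro U hU V hV
    simp only [Set.mem_iInter] at hU hV ⊢
    intro F
    simp only [T, Set.mem_ofPred_eq, Ultrafilter.eventually_add]
    filter_upwards [hU F] with x hx
    filter_upwards [hV (F ∪ x.support)] with y hy
    have hxy : Disjoint x.support y.support :=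
      (hy.2.mono_right Finset.subset_union_right).symm
    rw [← Finsupp.support_nonempty_iff, Finsupp.support_add_eq hxy] at *
    exact ⟨hx.1.mono Finset.subset_union_left, Finset.disjoint_union_left.mpr
      ⟨hx.2, hy.2.mono_right Finset.subset_union_left⟩⟩
  obtain ⟨U, hU, hidem⟩ := exists_idempotent_in_compact_add_subsemigroup
    Ultrafilter.continuous_add_left _ hT_nonempty (isClosed_iInter hT_closed).isCompact hT_add
  exact ⟨U, hidem, Set.mem_iInter.mp hU⟩

theorem exists_pairwise_disjoint_sums_mem {U : Ultrafilter BoolGrp} (hU : U + U = U)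
    (hsupp : ∀ F : Finset ℕ, ∀ᶠ g : BoolGrp in U, g ≠ 0 ∧ Disjoint g.support F)
    {s : Set BoolGrp} (hs : s ∈ U) :
    ∃ b : ℕ → BoolGrp, (∀ n, b n ≠ 0) ∧
      (Pairwise fun i j => Disjoint (b i).support (b j).support) ∧
      ∀ t : Finset ℕ, t.Nonempty → ∑ n ∈ t, b n ∈ s := by
  let next (s : Set BoolGrp) (x : BoolGrp) : Set BoolGrp :=
    {y ∈ s | x + y ∈ s ∧ y ≠ 0 ∧ Disjoint y.support x.support}
  -- `U + U = U` says exactly that `{x | ∀ᶠ y in U, x + y ∈ s}` is `U`-large when `s` is.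
  have hpick : ∀ s ∈ U, ∃ x ∈ s, next s x ∈ U := by
    intro s hs
    have hs' : ∀ᶠ x in U, ∀ᶠ y in U, x + y ∈ s := by
      rw [← Ultrafilter.eventually_add, hU]
      exact hs
    obtain ⟨x, hxs, hx⟩ := ((eventually_mem_set.mpr hs).and hs').exists
    exact ⟨x, hxs, by filter_upwards [hs, hx, hsupp x.support] with y h₁ h₂ h₃ using
      ⟨h₁, h₂, h₃⟩⟩
  choose! pick hpick_mem hpick_next using hpick
  let S (n : ℕ) : Set BoolGrp := (fun s => next s (pick s))^[n] {g ∈ s | g ≠ 0}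
  have hS_succ (n : ℕ) : S (n + 1) = next (S n) (pick (S n)) :=
    Function.iterate_succ_apply' _ _ _
  have hS_mem (n : ℕ) : S n ∈ U := by
    induction n with
    | zero => exact inter_mem hs (hsupp ∅ |>.mono fun g hg => hg.1)
    | succ n ih => rw [hS_succ]; exact hpick_next _ ih
  have hS_anti : Antitone S :=
    antitone_nat_of_succ_le fun n => by rw [hS_succ]; exact fun y hy => hy.1
  let b (n : ℕ) : BoolGrp := pick (S n)
  have hb (n : ℕ) : b n ∈ S n := hpick_mem _ (hS_mem n)
  have hsum (t : Finset ℕ) : ∀ n, t.Nonempty → (∀ i ∈ t, n ≤ i) → ∑ i ∈ t, b i ∈ S n := by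
    induction t using Finset.induction_on_min with
    | empty => simp
    | insert a t hlt ih =>
      intro n _ hn
      have hna : n ≤ a := hn a (Finset.mem_insert_self a t)
      rw [Finset.sum_insert fun ha => (hlt a ha).false]
      rcases t.eq_empty_or_nonempty with rfl | ht
      · simpa using hS_anti hna (hb a)
      · have h := ih (a + 1) ht fun i hi => hlt i hi
        rw [hS_succ] at h
        exact hS_anti hna h.2.1
  refine ⟨b, fun n => (hS_anti (Nat.zero_le n) (hb n)).2, ?_, fun t ht =>
    (hsum t 0 ht fun i _ => Nat.zero_le i).1⟩
  have hlt {i j : ℕ} (hij : i < j) : Disjoint (b j).support (b i).support := by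
    have h := hS_anti hij (hb j)
    rw [hS_succ] at h
    exact h.2.2.2
  exact fun i j hij => hij.lt_or_gt.elim (fun h => (hlt h).symm) hlt

def HasMonochromaticUnions {α ι : Type*} [DecidableEq α] (P : Finset α → Prop)
    (D : ι → Finset α) : Prop :=
  (∀ i, (D i).Nonempty) ∧ (Pairwise fun i j => Disjoint (D i) (D j)) ∧
    ((∀ s : Finset ι, s.Nonempty → P (s.biUnion D)) ∨
      ∀ s : Finset ι, s.Nonempty → ¬ P (s.biUnion D))

theorem exists_hasMonochromaticUnions_nat (P : Finset ℕ → Prop) :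
    ∃ D : ℕ → Finset ℕ, HasMonochromaticUnions P D := by
  obtain ⟨U, hU, hsupp⟩ := exists_idempotent_ultrafilter_disjoint_support
  have hblocks (Q : Finset ℕ → Prop) (hQ : {g : BoolGrp | Q g.support} ∈ U) :
      ∃ D : ℕ → Finset ℕ, (∀ n, (D n).Nonempty) ∧ (Pairwise fun i j => Disjoint (D i) (D j)) ∧
        ∀ t : Finset ℕ, t.Nonempty → Q (t.biUnion D) := by
    obtain ⟨b, hb, hdisj, hsum⟩ := exists_pairwise_disjoint_sums_mem hU hsupp hQ
    refine ⟨fun n => (b n).support, fun n => Finsupp.support_nonempty_iff.mpr (hb n), hdisj,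
      fun t ht => ?_⟩
    have h := hsum t ht
    rwa [Set.mem_ofPred_eq, Finsupp.support_sum_eq_biUnion _ fun _ _ hij => hdisj hij] at h
  rcases U.mem_or_compl_mem {g | P g.support} with h | h
  · obtain ⟨D, hne, hdisj, hD⟩ := hblocks P h
    exact ⟨D, hne, hdisj, Or.inl hD⟩
  · obtain ⟨D, hne, hdisj, hD⟩ := hblocks (fun S => ¬ P S) h
    exact ⟨D, hne, hdisj, Or.inr hD⟩

theorem exists_hasMonochromaticUnions_fin (m : ℕ) :
    ∃ M : ℕ, ∀ P : Finset (Fin M) → Prop, ∃ D : Fin m → Finset (Fin M),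
      HasMonochromaticUnions P D := by
  by_contra! hbad
  choose P hP using hbad
  let restrict (M : ℕ) (S : Finset ℕ) : Finset (Fin M) := Finset.univ.filter fun i => ↑i ∈ S
  -- a limit of the bad colourings along an ultrafilter
  let Q (S : Finset ℕ) : Prop := ∀ᶠ M in (hyperfilter ℕ : Ultrafilter ℕ), P M (restrict M S)
  obtain ⟨D, hne, hdisj, hmono⟩ := exists_hasMonochromaticUnions_nat Q
  let union (s : Finset (Fin m)) : Finset ℕ := (s.image Fin.val).biUnion D
  have hagree : ∀ᶠ M in (hyperfilter ℕ : Ultrafilter ℕ), (∀ j : Fin m, ∀ x ∈ D j, x < M) ∧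
      ∀ s : Finset (Fin m), P M (restrict M (union s)) ↔ Q (union s) := by
    refine (eventually_all.mpr fun j => ?_).and (eventually_all.mpr fun s => ?_)
    · refine (eventually_all_finset _).mpr fun x _ => ?_
      exact (Nat.cofinite_eq_atTop ▸ hyperfilter_le_cofinite) (eventually_gt_atTop x)
    · by_cases hs : Q (union s)
      · exact hs.mono fun M hM => iff_of_true hM hs
      · exact (Ultrafilter.eventually_not.mpr hs).mono fun M hM => iff_of_false hM hs
  obtain ⟨M, hbound, hiff⟩ := hagree.exists
  refine hP M (fun j => restrict M (D j)) ⟨fun j => ?_, fun i j hij => ?_, ?_⟩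
  · obtain ⟨x, hx⟩ := hne j
    exact ⟨⟨x, hbound j x hx⟩, by simpa [restrict] using hx⟩
  · refine Finset.disjoint_left.mpr fun x hxi hxj => ?_
    simp only [restrict, Finset.mem_filter, Finset.mem_univ, true_and] at hxi hxj
    exact Finset.disjoint_left.mp (hdisj (Fin.val_injective.ne hij)) hxi hxj
  · have hunion (s : Finset (Fin m)) :
        s.biUnion (fun j => restrict M (D j)) = restrict M (union s) := by
      ext i
      simp [restrict, union]
    simp only [hunion, hiff]
    exact hmono.imp (fun h s hs => h _ (hs.image _)) fun h s hs => h _ (hs.image _)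

end FiniteUnions

theorem SuitWitness.comp_injective {X Y : Set BoolGrp} {M m : ℕ} {y : Fin M → BoolGrp}
    (hy : SuitWitness X Y y) {r : Fin m → Fin M} (hr : Function.Injective r) :
    SuitWitness X Y (y ∘ r) := by
  refine ⟨fun j => hy.1 (r j), fun i j hij => ?_⟩
  rcases (hr.ne hij.ne).lt_or_gt with h | h
  · exact hy.2 _ _ h
  · exact Set.inter_comm (Xsupp X (y (r i)) : Set BoolGrp) _ ▸ hy.2 _ _ h

theorem AdequateWitness.blockSums {𝒴 : Set (Set BoolGrp × Set BoolGrp)} (h𝒴 : GoodFamily 𝒴)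
    {A C : Set BoolGrp} {M m : ℕ} {a : Fin M → BoolGrp} (ha : AdequateWitness 𝒴 A a)
    {D : Fin m → Finset (Fin M)} (hne : ∀ j, (D j).Nonempty)
    (hdisj : Pairwise fun j k => Disjoint (D j) (D k))
    (hC : ∀ s : Finset (Fin m), s.Nonempty →
      ∑ i ∈ s.biUnion D, a i ∈ A → ∑ i ∈ s.biUnion D, a i ∈ C) :
    AdequateWitness 𝒴 C fun j => ∑ i ∈ D j, a i := by
  intro XY hXY
  obtain ⟨hFS, y, hy, hpiv⟩ := ha XY hXY
  have hmem {S : Finset (Fin M)} (hS : S.Nonempty) : ∑ i ∈ S, a i ∈ A ∩ FSset XY.2 :=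
    hFS ⟨S, hS, rfl⟩
  refine ⟨?_, ?_⟩
  · rintro _ ⟨s, hs, rfl⟩
    have hs' := hs.biUnion fun j _ => hne j
    rw [← Finset.sum_biUnion fun j _ k _ hjk => hdisj hjk]
    exact ⟨hC s hs (hmem hs').1, (hmem hs').2⟩
  · choose r hr using hne
    have hr_inj : Function.Injective r := fun j k hjk => by_contra fun hne =>
      Finset.disjoint_left.mp (hdisj hne) (hr j) (hjk ▸ hr k)
    have hYind := (h𝒴 XY hXY).2.linearIndependent (h𝒴 XY hXY).1
    refine ⟨y ∘ r, hy.comp_injective hr_inj, fun j k hjk => ?_⟩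
    have hsupp (l : Fin m) : y (r j) ∈ Xsupp XY.2 (∑ i ∈ D l, a i) ↔ r j ∈ D l := by
      refine mem_Xsupp_sum_iff hYind (hy.1 (r j)) (fun i => ?_) (fun i => ?_)
        (hmem ⟨r l, hr l⟩).2
      · simpa using (hmem (Finset.singleton_nonempty i)).2
      · refine ⟨fun h => by_contra fun hi => (hpiv (r j) i (Ne.symm hi)).2 h, ?_⟩
        rintro rfl
        exact (hpiv (r j) (r k) (hr_inj.ne hjk)).1
    exact ⟨(hsupp j).mpr (hr j),
      fun h => Finset.disjoint_left.mp (hdisj hjk) (hr j) ((hsupp k).mp h)⟩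

/-- For each `m` there is an `M` such that whenever `𝒴` is a finite family of pairs
`(X, Y)` with `X` linearly independent and `Y` suitable for `X`, and a `(𝒴, M)`-adequate
set is partitioned into two cells, one of the cells is `(𝒴, m)`-adequate. -/
theorem adequate_partition_finitary :
    ∀ m : ℕ, ∃ M : ℕ, ∀ 𝒴 : Set (Set BoolGrp × Set BoolGrp), 𝒴.Finite → GoodFamily 𝒴 →
      ∀ A A₀ A₁ : Set BoolGrp, Adequate 𝒴 M A → A = A₀ ∪ A₁ →
        Adequate 𝒴 m A₀ ∨ Adequate 𝒴 m A₁ := by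
  intro m
  obtain ⟨M, hM⟩ := exists_hasMonochromaticUnions_fin m
  refine ⟨M, fun 𝒴 _ h𝒴 A A₀ A₁ ⟨a, ha⟩ hA => ?_⟩
  obtain ⟨D, hne, hdisj, hmono⟩ := hM fun S => ∑ i ∈ S, a i ∈ A₀
  rcases hmono with h₀ | h₁
  · exact Or.inl ⟨_, ha.blockSums h𝒴 hne hdisj fun s hs _ => h₀ s hs⟩
  · refine Or.inr ⟨_, ha.blockSums h𝒴 hne hdisj fun s hs hsA => ?_⟩
    exact (hA ▸ hsA).resolve_left (h₁ s hs)
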